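/- arXiv:1409.4503 — 6 statements merged into one kernel-verified Lean document; each statement's English description precedes it below -/
import Mathlib

section
/- Conversely, if p ∈ [0,1]^n satisfies Σ_{i ∈ M} p_i ≤ |L| for every pair (L, M) with L a subset of resources and M = OnlyAuditedBy(L), then there exist values p_i^j ≥ 0 with p_i = Σ_j p_i^j, Σ_i p_i^j ≤ 1 for each resource j, and p_i^j = 0 whenever (j,i) ∈ R. That is, the coverage vector is implementable by a feasible resource-to-target fractional assignment. -/
/-!
Every set `s` of targets lies in `onlyAuditedBy R (Γ s)`, where `Γ s` is the set of resources
able to audit some target of `s`; so the hypothesis gives Hall's condition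
`∑ i ∈ s, p i ≤ #(Γ s)`. Scaling by `N` and rounding down, Hall's marriage theorem applied to
units of demand and units of capacity yields integral assignments, hence fractional ones with
coverage vectors `⌊N p⌋₊ / N → p`. The achievable coverage vectors form the continuous image of
a compact polytope, a closed set, so `p` is achievable.
-/

open Finset Filter Topology

/-- The set of targets that can only be audited by resources in `L`
(`R j i` means resource `j` CANNOT audit target `i`). -/
def onlyAuditedBy {n k : ℕ} (R : Fin k → Fin n → Prop) [∀ j i, Decidable (R j i)]
    (L : Finset (Fin k)) : Finset (Fin n) :=
  Finset.univ.filter fun i => ∀ j, ¬ R j i → j ∈ L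

lemma card_filter_sigma_fst_eq {ι : Type*} [Fintype ι] [DecidableEq ι] (a : ι → ℕ) (i : ι) :
    #{x : (i : ι) × Fin (a i) | x.1 = i} = a i := by
  have : ({x : (i : ι) × Fin (a i) | x.1 = i} : Finset _) =
      univ.map (Function.Embedding.sigmaMk i) := by
    ext ⟨i', u⟩
    simp only [mem_filter, mem_univ, true_and, Finset.mem_map]
    constructor
    · rintro rfl
      exact ⟨u, rfl⟩
    · rintro ⟨v, hv⟩
      cases hv
      rfl
  rw [this, card_map, card_univ, Fintype.card_fin]

section Transport

variable {ι κ : Type*}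

theorem exists_nat_transport_of_hall [Fintype ι] [Fintype κ] [DecidableEq κ]
    (A : ι → Finset κ) (a : ι → ℕ) (b : κ → ℕ)
    (hall : ∀ s : Finset ι, ∑ i ∈ s, a i ≤ ∑ j ∈ s.biUnion A, b j) :
    ∃ c : κ → ι → ℕ, (∀ i, ∑ j, c j i = a i) ∧ (∀ j, ∑ i, c j i ≤ b j) ∧
      ∀ i, ∀ j ∉ A i, c j i = 0 := by
  classical
  let t : ((i : ι) × Fin (a i)) → Finset ((j : κ) × Fin (b j)) :=
    fun x => (A x.1).sigma fun _ => univ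
  have hall_units : ∀ s, #s ≤ #(s.biUnion t) := fun s => calc
    #s ≤ #((s.image Sigma.fst).sigma fun i => (univ : Finset (Fin (a i)))) :=
        card_le_card fun x hx => mem_sigma.2 ⟨mem_image_of_mem _ hx, mem_univ _⟩
    _ = ∑ i ∈ s.image Sigma.fst, a i := by simp
    _ ≤ ∑ j ∈ (s.image Sigma.fst).biUnion A, b j := hall _
    _ = #(((s.image Sigma.fst).biUnion A).sigma fun j => (univ : Finset (Fin (b j)))) := by simp
    _ ≤ #(s.biUnion t) := card_le_card fun y hy => by
        obtain ⟨hj, -⟩ := mem_sigma.1 hy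
        obtain ⟨i, hi, hj⟩ := mem_biUnion.1 hj
        obtain ⟨x, hx, rfl⟩ := mem_image.1 hi
        exact mem_biUnion.2 ⟨x, hx, mem_sigma.2 ⟨hj, mem_univ _⟩⟩
  obtain ⟨f, hf_inj, hf_mem⟩ := (all_card_le_biUnion_card_iff_exists_injective t).1 hall_units
  refine ⟨fun j i => #{x | x.1 = i ∧ (f x).1 = j}, fun i => ?_, fun j => ?_, fun i j hj => ?_⟩
  · rw [← card_filter_sigma_fst_eq a i, card_eq_sum_card_fiberwise (f := fun x => (f x).1)
      (t := univ) fun _ _ => mem_univ _]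
    simp only [filter_filter]
  · calc ∑ i, #{x | x.1 = i ∧ (f x).1 = j}
        = #{x | (f x).1 = j} := by
          rw [card_eq_sum_card_fiberwise (f := Sigma.fst) (t := univ) fun _ _ => mem_univ _]
          simp only [filter_filter, and_comm]
      _ ≤ #{y : (j : κ) × Fin (b j) | y.1 = j} :=
          card_le_card_of_injOn f (fun x hx => by simpa using hx) hf_inj.injOn
      _ = b j := card_filter_sigma_fst_eq b j
  · rw [card_eq_zero, filter_eq_empty_iff]
    rintro x - ⟨rfl, rfl⟩
    exact hj (mem_sigma.1 (hf_mem x)).1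

def fractionalAssignments [Fintype ι] [Fintype κ] (A : ι → Finset κ) : Set (κ → ι → ℝ) :=
  {q | (∀ j i, 0 ≤ q j i) ∧ (∀ j, ∑ i, q j i ≤ 1) ∧ ∀ i, ∀ j ∉ A i, q j i = 0}

def coverage [Fintype κ] (q : κ → ι → ℝ) (i : ι) : ℝ := ∑ j, q j i

lemma continuous_coverage [Fintype κ] : Continuous (coverage : (κ → ι → ℝ) → ι → ℝ) := by
  unfold coverage
  fun_prop

lemma isCompact_fractionalAssignments [Fintype ι] [Fintype κ] (A : ι → Finset κ) :
    IsCompact (fractionalAssignments A) := by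
  refine (isCompact_Icc (a := 0) (b := 1)).of_isClosed_subset ?_
    fun q ⟨hq_nonneg, hq_cap, _⟩ => ⟨hq_nonneg, ?_⟩
  · simp only [fractionalAssignments, Set.ofPred_and, Set.ofPred_forall]
    refine .inter (isClosed_iInter fun j => isClosed_iInter fun i => isClosed_le ?_ ?_)
      (.inter (isClosed_iInter fun j => isClosed_le ?_ ?_) (isClosed_iInter fun i =>
        isClosed_iInter fun j => isClosed_iInter fun _ => isClosed_eq ?_ ?_)) <;> fun_prop
  · exact fun j i => (single_le_sum (fun i _ => hq_nonneg j i) (mem_univ i)).trans (hq_cap j)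

lemma coverage_div_mem_image [Fintype ι] [Fintype κ] [DecidableEq κ] (A : ι → Finset κ)
    (a : ι → ℕ) (N : ℕ)
    (hall : ∀ s : Finset ι, ∑ i ∈ s, a i ≤ N * #(s.biUnion A)) :
    (fun i => (a i : ℝ) / N) ∈ coverage '' fractionalAssignments A := by
  obtain ⟨c, hc_dem, hc_cap, hc_zero⟩ :=
    exists_nat_transport_of_hall A a (fun _ => N) fun s => by simpa [mul_comm] using hall s
  refine ⟨fun j i => c j i / N, ⟨fun j i => by positivity, fun j => ?_, fun i j hj => ?_⟩, ?_⟩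
  · rw [← sum_div]
    exact div_le_one_of_le₀ (by exact_mod_cast hc_cap j) N.cast_nonneg
  · simp [hc_zero i j hj]
  · ext i
    simp only [coverage, ← sum_div]
    exact_mod_cast congrArg (fun m : ℕ => (m : ℝ) / N) (hc_dem i)

theorem mem_coverage_image_of_hall [Fintype ι] [Fintype κ] [DecidableEq κ]
    (A : ι → Finset κ) (p : ι → ℝ) (hp : ∀ i, 0 ≤ p i)
    (hall : ∀ s : Finset ι, ∑ i ∈ s, p i ≤ #(s.biUnion A)) :
    p ∈ coverage '' fractionalAssignments A := by
  have hclosed : IsClosed (coverage '' fractionalAssignments A) :=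
    ((isCompact_fractionalAssignments A).image continuous_coverage).isClosed
  have happrox (N : ℕ) :
      (fun i => (⌊p i * N⌋₊ : ℝ) / N) ∈ coverage '' fractionalAssignments A := by
    refine coverage_div_mem_image A _ N fun s => ?_
    have : ∑ i ∈ s, (⌊p i * N⌋₊ : ℝ) ≤ N * #(s.biUnion A) := calc
      ∑ i ∈ s, (⌊p i * N⌋₊ : ℝ) ≤ ∑ i ∈ s, p i * N :=
          sum_le_sum fun i _ => Nat.floor_le (mul_nonneg (hp i) N.cast_nonneg)
      _ = N * ∑ i ∈ s, p i := by rw [← sum_mul, mul_comm]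
      _ ≤ N * #(s.biUnion A) := mul_le_mul_of_nonneg_left (hall s) N.cast_nonneg
    exact_mod_cast this
  exact hclosed.mem_of_tendsto (tendsto_pi_nhds.2 fun i =>
    (tendsto_nat_floor_mul_div_atTop (hp i)).comp tendsto_natCast_atTop_atTop)
    (Eventually.of_forall happrox)

end Transport

/-- Marginals satisfying all `OnlyAuditedBy` constraints are implementable by a
feasible fractional resource-to-target assignment. -/
theorem stmt3 {n k : ℕ} (R : Fin k → Fin n → Prop) [∀ j i, Decidable (R j i)]
    (p : Fin n → ℝ)
    (hp : ∀ i, 0 ≤ p i ∧ p i ≤ 1)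
    (hC : ∀ L : Finset (Fin k), ∑ i ∈ onlyAuditedBy R L, p i ≤ (L.card : ℝ)) :
    ∃ q : Fin k → Fin n → ℝ,
      (∀ j i, 0 ≤ q j i) ∧
      (∀ i, p i = ∑ j, q j i) ∧
      (∀ j, ∑ i, q j i ≤ 1) ∧
      (∀ j i, R j i → q j i = 0) := by
  let A : Fin n → Finset (Fin k) := fun i => {j | ¬ R j i}
  have hall (s : Finset (Fin n)) : ∑ i ∈ s, p i ≤ #(s.biUnion A) := calc
    ∑ i ∈ s, p i ≤ ∑ i ∈ onlyAuditedBy R (s.biUnion A), p i := by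
      refine sum_le_sum_of_subset_of_nonneg (fun i hi => ?_) fun i _ _ => (hp i).1
      simp only [onlyAuditedBy, mem_filter, mem_univ, true_and]
      exact fun j hj => mem_biUnion.2 ⟨i, hi, by simpa [A] using hj⟩
    _ ≤ #(s.biUnion A) := hC _
  obtain ⟨q, ⟨hq_nonneg, hq_cap, hq_zero⟩, hq⟩ :=
    mem_coverage_image_of_hall A p (fun i => (hp i).1) hall
  exact ⟨q, hq_nonneg, fun i => (congrFun hq i).symm, hq_cap,
    fun j i hR => hq_zero i j (by simpa [A] using hR)⟩
end

section
/- Every extreme point of the polytope C⁺ ⊆ ℝ^n defined by 0 ≤ p_i ≤ 1 for all i and constraints of the form Σ_{i ∈ M_c} p_i ≤ b_c (for a family of constraints indexed by c with M_c ⊆ {1,...,n}, b_c ∈ ℕ) arising from the OnlyAuditedBy construction (including the redundant constraints with |L| ≥ |M|) has all coordinates equal to 0 or 1. -/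
open Filter Topology Finset

theorem notMem_extremePoints_of_eventually_add_smul_mem {E : Type*} [AddCommGroup E]
    [Module ℝ E] {A : Set E} {x v : E} (hv : v ≠ 0)
    (h : ∀ᶠ t in 𝓝 (0 : ℝ), x + t • v ∈ A) : x ∉ A.extremePoints ℝ := by
  have hneg : ∀ᶠ t in 𝓝 (0 : ℝ), x + (-t) • v ∈ A :=
    (continuous_neg.tendsto' 0 0 neg_zero).eventually h
  obtain ⟨t, ⟨hplus, hminus⟩, ht⟩ :=
    ((h.and hneg).filter_mono nhdsWithin_le_nhds |>.and self_mem_nhdsWithin).exists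
      (f := 𝓝[≠] (0 : ℝ))
  intro hx
  have hseg : x ∈ openSegment ℝ (x + (-t) • v) (x + t • v) := by
    simpa [neg_smul, ← sub_eq_add_neg] using mem_openSegment_sub_add (𝕜 := ℝ) x (t • v)
  have hzero : (-t) • v = 0 := by simpa using hx.2 hminus hplus hseg
  exact (smul_eq_zero.1 hzero).elim (fun h => ht (neg_eq_zero.1 h)) hv

theorem eventually_add_mul_le {a b c : ℝ} (h : a ≤ c) (hb : a = c → b = 0) :
    ∀ᶠ t in 𝓝 (0 : ℝ), a + t * b ≤ c := by
  rcases h.lt_or_eq with h | h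
  · have hlim : Tendsto (fun t : ℝ => a + t * b) (𝓝 0) (𝓝 a) :=
      (by fun_prop : Continuous fun t : ℝ => a + t * b).tendsto' 0 a (by simp)
    exact (hlim.eventually_lt_const h).mono fun _ => le_of_lt
  · simp [h, hb h]

section Audit

variable {n k : ℕ} (R : Fin k → Fin n → Prop) [∀ j i, Decidable (R j i)]

/-- The polytope `C⁺`. -/
def auditPolytope : Set (Fin n → ℝ) :=
  {q | (∀ i, 0 ≤ q i ∧ q i ≤ 1) ∧ ∀ L : Finset (Fin k), ∑ i ∈ onlyAuditedBy R L, q i ≤ L.card}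

def IsTight (p : Fin n → ℝ) (L : Finset (Fin k)) : Prop :=
  ∑ i ∈ onlyAuditedBy R L, p i = L.card

theorem onlyAuditedBy_mono : Monotone (onlyAuditedBy R) := by
  intro L L' h i
  simp only [onlyAuditedBy, mem_filter, mem_univ, true_and]
  exact fun hi j hj => h (hi j hj)

theorem onlyAuditedBy_inter (L L' : Finset (Fin k)) :
    onlyAuditedBy R (L ∩ L') = onlyAuditedBy R L ∩ onlyAuditedBy R L' := by
  ext i
  simp only [onlyAuditedBy, mem_filter, mem_univ, true_and, mem_inter, imp_and, forall_and]

variable {R}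

theorem IsTight.inter {p : Fin n → ℝ} (hp : p ∈ auditPolytope R) {L L' : Finset (Fin k)}
    (hL : IsTight R p L) (hL' : IsTight R p L') : IsTight R p (L ∩ L') := by
  obtain ⟨hbox, hsum⟩ := hp
  have hunion : ∑ i ∈ onlyAuditedBy R L ∪ onlyAuditedBy R L', p i
      ≤ ∑ i ∈ onlyAuditedBy R (L ∪ L'), p i :=
    sum_le_sum_of_subset_of_nonneg
      (union_subset (onlyAuditedBy_mono R subset_union_left)
        (onlyAuditedBy_mono R subset_union_right))
      fun i _ _ => (hbox i).1
  have hincl_excl := sum_union_inter (s₁ := onlyAuditedBy R L) (s₂ := onlyAuditedBy R L') (f := p)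
  have hcard : ((L ∪ L').card : ℝ) + (L ∩ L').card = L.card + L'.card := by
    exact_mod_cast card_union_add_card_inter L L'
  have hfeasU := hsum (L ∪ L')
  have hfeasI := hsum (L ∩ L')
  unfold IsTight at hL hL' ⊢
  rw [onlyAuditedBy_inter] at hfeasI ⊢
  linarith

theorem IsTight.exists_ne_fractional {p : Fin n → ℝ} (hp : p ∈ auditPolytope R)
    {L : Finset (Fin k)} (hL : IsTight R p L) {i : Fin n} (hi : i ∈ onlyAuditedBy R L)
    (hfrac : 0 < p i ∧ p i < 1) :
    ∃ j ∈ onlyAuditedBy R L, j ≠ i ∧ 0 < p j ∧ p j < 1 := by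
  by_contra! hnone
  set s := (onlyAuditedBy R L).erase i
  have hboole : ∀ j ∈ s, p j = if p j = 1 then 1 else 0 := by
    intro j hj
    obtain ⟨h0, h1⟩ := hp.1 j
    rcases h0.eq_or_lt with h | h
    · simp [← h]
    · simp [le_antisymm h1 (hnone j (mem_of_mem_erase hj) (ne_of_mem_erase hj) h)]
  set m := #(s.filter fun j => p j = 1)
  have hrest : ∑ j ∈ s, p j = m := by rw [sum_congr rfl hboole, sum_boole]
  have hpi : p i = ((L.card - m : ℤ) : ℝ) := by
    have hsplit := add_sum_erase _ p hi
    unfold IsTight at hL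
    push_cast
    linarith
  rw [hpi] at hfrac
  have h0 : (0 : ℤ) < L.card - m := by exact_mod_cast hfrac.1
  have h1 : (L.card - m : ℤ) < 1 := by exact_mod_cast hfrac.2
  omega

theorem exists_fractional_pair {p : Fin n → ℝ} (hp : p ∈ auditPolytope R)
    (hex : ∃ L, IsTight R p L ∧ ∃ i ∈ onlyAuditedBy R L, 0 < p i ∧ p i < 1) :
    ∃ a b, a ≠ b ∧ (0 < p a ∧ p a < 1) ∧ (0 < p b ∧ p b < 1) ∧
      ∀ L, IsTight R p L → (a ∈ onlyAuditedBy R L ↔ b ∈ onlyAuditedBy R L) := by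
  obtain ⟨L₀, hmin⟩ := exists_minimal_of_wellFoundedLT _ hex
  obtain ⟨hL₀, a, ha, hfa⟩ := hmin.prop
  obtain ⟨b, hb, hba, hfb⟩ := hL₀.exists_ne_fractional hp ha hfa
  have hL₀_subset : ∀ L, IsTight R p L → ∀ i ∈ onlyAuditedBy R L, i ∈ onlyAuditedBy R L₀ →
      0 < p i ∧ p i < 1 → onlyAuditedBy R L₀ ⊆ onlyAuditedBy R L := by
    intro L hL i hiL hiL₀ hfi
    have hiI : i ∈ onlyAuditedBy R (L ∩ L₀) := by
      rw [onlyAuditedBy_inter]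
      exact mem_inter.2 ⟨hiL, hiL₀⟩
    have hL₀I : L₀ ≤ L ∩ L₀ := hmin.le_of_le ⟨hL.inter hp hL₀, i, hiI, hfi⟩ inter_subset_right
    exact onlyAuditedBy_mono R (hL₀I.trans inter_subset_left)
  exact ⟨a, b, hba.symm, hfa, hfb, fun L hL =>
    ⟨fun haL => hL₀_subset L hL a haL ha hfa hb, fun hbL => hL₀_subset L hL b hbL hb hfb ha⟩⟩

theorem notMem_extremePoints_auditPolytope {p d : Fin n → ℝ} (hp : p ∈ auditPolytope R)
    (hd : d ≠ 0) (hfrac : ∀ i, d i ≠ 0 → 0 < p i ∧ p i < 1)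
    (htight : ∀ L, IsTight R p L → ∑ i ∈ onlyAuditedBy R L, d i = 0) :
    p ∉ (auditPolytope R).extremePoints ℝ := by
  refine notMem_extremePoints_of_eventually_add_smul_mem hd ?_
  obtain ⟨hbox, hsum⟩ := hp
  have hlower : ∀ i, ∀ᶠ t in 𝓝 (0 : ℝ), -p i + t * -d i ≤ 0 := fun i =>
    eventually_add_mul_le (by linarith [hbox i]) fun h =>
      neg_eq_zero.2 (by_contra fun hdi => (hfrac i hdi).1.ne' (by linarith))
  have hupper : ∀ i, ∀ᶠ t in 𝓝 (0 : ℝ), p i + t * d i ≤ 1 := fun i =>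
    eventually_add_mul_le (hbox i).2 fun h => by_contra fun hdi => (hfrac i hdi).2.ne h
  have hcons : ∀ L, ∀ᶠ t in 𝓝 (0 : ℝ),
      ∑ i ∈ onlyAuditedBy R L, p i + t * ∑ i ∈ onlyAuditedBy R L, d i ≤ L.card := fun L =>
    eventually_add_mul_le (hsum L) (htight L)
  filter_upwards [eventually_all.2 hlower, eventually_all.2 hupper, eventually_all.2 hcons]
    with t hl hu hc
  refine ⟨fun i => ⟨?_, ?_⟩, fun L => ?_⟩
  · simp only [Pi.add_apply, Pi.smul_apply, smul_eq_mul]; linarith [hl i]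
  · simp only [Pi.add_apply, Pi.smul_apply, smul_eq_mul]; linarith [hu i]
  · simpa only [Pi.add_apply, Pi.smul_apply, smul_eq_mul, sum_add_distrib, ← mul_sum] using hc L

theorem exists_balanced_direction {p : Fin n → ℝ} (hp : p ∈ auditPolytope R) {i₀ : Fin n}
    (hi₀ : 0 < p i₀ ∧ p i₀ < 1) :
    ∃ d : Fin n → ℝ, d ≠ 0 ∧ (∀ i, d i ≠ 0 → 0 < p i ∧ p i < 1) ∧
      ∀ L, IsTight R p L → ∑ i ∈ onlyAuditedBy R L, d i = 0 := by
  by_cases hex : ∃ L, IsTight R p L ∧ ∃ i ∈ onlyAuditedBy R L, 0 < p i ∧ p i < 1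
  · obtain ⟨a, b, hab, ha, hb, hiff⟩ := exists_fractional_pair hp hex
    refine ⟨Pi.single a 1 - Pi.single b 1, fun h => by simpa [hab] using congrFun h a,
      fun i hi => ?_, fun L hL => ?_⟩
    · by_cases hia : i = a
      · exact hia ▸ ha
      by_cases hib : i = b
      · exact hib ▸ hb
      simp [hia, hib] at hi
    · by_cases haL : a ∈ onlyAuditedBy R L <;>
        simp [sum_sub_distrib, sum_pi_single', haL, ← hiff L hL]
  · refine ⟨Pi.single i₀ 1, fun h => by simpa using congrFun h i₀,
      fun i hi => ?_, fun L hL => ?_⟩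
    · by_cases hii : i = i₀
      · exact hii ▸ hi₀
      simp [hii] at hi
    · simpa [sum_pi_single'] using fun h => hex ⟨L, hL, i₀, h, hi₀⟩

end Audit

/-- Every extreme point of the polytope `C⁺` (unit cube intersected with all
`OnlyAuditedBy` constraints, the redundant ones included) is a 0/1 vector. -/
theorem stmt4 {n k : ℕ} (R : Fin k → Fin n → Prop) [∀ j i, Decidable (R j i)]
    (p : Fin n → ℝ)
    (hp : p ∈ Set.extremePoints ℝ
      {q : Fin n → ℝ | (∀ i, 0 ≤ q i ∧ q i ≤ 1) ∧
        ∀ L : Finset (Fin k), ∑ i ∈ onlyAuditedBy R L, q i ≤ (L.card : ℝ)}) :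
    ∀ i, p i = 0 ∨ p i = 1 := by
  have hpC : p ∈ auditPolytope R := hp.1
  by_contra! ⟨i₀, hi₀⟩
  have hfrac : 0 < p i₀ ∧ p i₀ < 1 :=
    ⟨lt_of_le_of_ne (hpC.1 i₀).1 (Ne.symm hi₀.1), lt_of_le_of_ne (hpC.1 i₀).2 hi₀.2⟩
  obtain ⟨d, hd, hsupp, hbal⟩ := exists_balanced_direction hpC hfrac
  exact notMem_extremePoints_auditPolytope hpC hd hsupp hbal hp
end

section
/- Let T(n, d, t) denote the maximum number of connected induced subgraphs over all graphs with n vertices, maximum degree at most d, and at most t vertices of degree ≥ 3. Then T(n, d, t) ≤ 2^{(2(d+1))^{t+1}} · n^{(d+1)^{t+1}}. In particular, for fixed constants d and t, the number of connected induced subgraphs is polynomial in n. -/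
/-!
Let `X` be a vertex of degree at least three. A connected set `S ∋ X` is recovered from the
components of `S - X`, each of which contains a neighbour of `X`. Recording, for each of the at
most `d` neighbours `y` of `X`, either nothing or the connected subset of `U - X` around `y`
gives `T(U) ≤ T(U - X) + (T(U - X) + 1) ^ d ≤ (2 T(U - X)) ^ (d + 1)`. Once `U` contains no
vertex of degree at least three, a connected subset of `U` is a single vertex, a whole connected
component of `G`, or a path determined by its first edge and its size: at most `2n + dn²` sets.
-/

open Finset

namespace SimpleGraph

variable {V : Type*} {G : SimpleGraph V}

theorem subset_of_induce_connected_of_adj_closed {S C : Finset V}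
    (hS : (G.induce (S : Set V)).Connected) {x : V} (hxS : x ∈ S) (hxC : x ∈ C)
    (hC : ∀ c ∈ C, ∀ z ∈ S, G.Adj c z → z ∈ C) : S ⊆ C := by
  intro z hzS
  by_contra hzC
  obtain ⟨p⟩ := hS.preconnected ⟨x, hxS⟩ ⟨z, hzS⟩
  obtain ⟨e, -, he, he'⟩ := p.exists_boundary_dart {v : (S : Set V) | (v : V) ∈ C} hxC hzC
  exact he' (hC _ he _ e.snd.2 e.adj)

theorem exists_adj_of_induce_connected {S : Finset V}
    (hS : (G.induce (S : Set V)).Connected) {x y : V} (hx : x ∈ S) (hy : y ∈ S)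
    (hxy : x ≠ y) :
    ∃ z ∈ S, G.Adj x z := by
  by_contra! h
  have := subset_of_induce_connected_of_adj_closed hS hx (mem_singleton_self x)
    (by simp only [mem_singleton]; rintro c rfl z hz hcz; exact absurd hcz (h z hz))
  exact hxy (mem_singleton.1 (this hy)).symm

open Classical in
variable (G) in
noncomputable def componentIn (T : Finset V) (y : V) : Finset V :=
  T.filter fun z => ∃ C ⊆ T, y ∈ C ∧ z ∈ C ∧ (G.induce (C : Set V)).Connected

theorem mem_componentIn {T : Finset V} {y z : V} :
    z ∈ G.componentIn T y ↔
      ∃ C ⊆ T, y ∈ C ∧ z ∈ C ∧ (G.induce (C : Set V)).Connected := by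
  simp only [componentIn, mem_filter, and_iff_right_iff_imp]
  rintro ⟨C, hCT, -, hz, -⟩
  exact hCT hz

theorem componentIn_subset (T : Finset V) (y : V) : G.componentIn T y ⊆ T := fun _ hz =>
  have ⟨_, hCT, _, hzC, _⟩ := mem_componentIn.1 hz
  hCT hzC

theorem self_mem_componentIn {T : Finset V} {y : V} (hy : y ∈ T) : y ∈ G.componentIn T y := by
  refine mem_componentIn.2 ⟨{y}, singleton_subset_iff.2 hy, mem_singleton_self y,
    mem_singleton_self y, ?_⟩
  rw [coe_singleton, induce_singleton_eq_top]
  exact connected_top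

theorem mem_componentIn_of_adj {T : Finset V} {y c z : V} (hc : c ∈ G.componentIn T y)
    (hz : z ∈ T) (hcz : G.Adj c z) : z ∈ G.componentIn T y := by
  classical
  obtain ⟨C, hCT, hyC, hcC, hC⟩ := mem_componentIn.1 hc
  refine mem_componentIn.2 ⟨insert z C, insert_subset hz hCT, mem_insert_of_mem hyC,
    mem_insert_self z C, ?_⟩
  have hCz : ((insert z C : Finset V) : Set V) = (C : Set V) ∪ {c, z} := by
    ext v
    simp only [coe_insert, Set.mem_insert_iff, mem_coe, Set.mem_union]
    grind
  rw [hCz]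
  exact induce_union_connected hC.preconnected (induce_pair_connected_of_adj hcz).preconnected
    ⟨c, hcC, by simp⟩

theorem induce_componentIn_connected {T : Finset V} {y : V} (hy : y ∈ T) :
    (G.induce (G.componentIn T y : Set V)).Connected := by
  refine induce_connected_of_patches y (self_mem_componentIn hy) fun {z} hz => ?_
  obtain ⟨C, hCT, hyC, hzC, hC⟩ := mem_componentIn.1 hz
  refine ⟨C, fun v hv => ?_, hyC, hzC, hC.preconnected _ _⟩
  exact mem_componentIn.2 ⟨C, hCT, hyC, hv, hC⟩

theorem mem_iff_eq_or_mem_componentIn_erase [DecidableEq V] {S : Finset V}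
    (hS : (G.induce (S : Set V)).Connected) {X : V} (hX : X ∈ S) {z : V} :
    z ∈ S ↔ z = X ∨ ∃ y ∈ S, G.Adj X y ∧ z ∈ G.componentIn (S.erase X) y := by
  classical
  refine ⟨fun hz => ?_, ?_⟩
  · have hsub := subset_of_induce_connected_of_adj_closed (C := insert X
      (S.filter fun z => ∃ y ∈ S, G.Adj X y ∧ z ∈ G.componentIn (S.erase X) y)) hS hX
      (mem_insert_self _ _) ?_ hz
    · simpa [and_iff_right hz] using hsub
    rintro c hc v hv hcv
    simp only [mem_insert, mem_filter] at hc ⊢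
    by_cases hvX : v = X
    · exact .inl hvX
    have hvE : v ∈ S.erase X := mem_erase.2 ⟨hvX, hv⟩
    rcases hc with rfl | ⟨-, y, hy, hXy, hcy⟩
    · exact .inr ⟨hv, v, hv, hcv, self_mem_componentIn hvE⟩
    · exact .inr ⟨hv, y, hy, hXy, mem_componentIn_of_adj hcy hvE hcv⟩
  · rintro (rfl | ⟨y, -, -, hz⟩)
    · exact hX
    · exact mem_of_mem_erase (componentIn_subset _ _ hz)

theorem eq_of_componentIn_erase_eq [DecidableEq V] {S S' : Finset V}
    (hS : (G.induce (S : Set V)).Connected)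
    (hS' : (G.induce (S' : Set V)).Connected) {X : V} (hX : X ∈ S) (hX' : X ∈ S')
    (hnbr : ∀ y, G.Adj X y → (y ∈ S ↔ y ∈ S'))
    (hcomp : ∀ y ∈ S, G.Adj X y →
      G.componentIn (S.erase X) y = G.componentIn (S'.erase X) y) :
    S = S' := by
  ext z
  rw [mem_iff_eq_or_mem_componentIn_erase hS hX, mem_iff_eq_or_mem_componentIn_erase hS' hX']
  refine or_congr_right ⟨fun ⟨y, hy, hXy, hz⟩ => ⟨y, (hnbr y hXy).1 hy, hXy, ?_⟩,
    fun ⟨y, hy, hXy, hz⟩ => ⟨y, (hnbr y hXy).2 hy, hXy, ?_⟩⟩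
  · rwa [← hcomp y hy hXy]
  · rwa [hcomp y ((hnbr y hXy).2 hy) hXy]

theorem induce_erase_connected_of_unique_adj [DecidableEq V] {S : Finset V}
    (hS : (G.induce (S : Set V)).Connected) {u w : V} (hu : u ∈ S) (hw : w ∈ S)
    (huw : G.Adj u w) (huniq : ∀ x ∈ S, G.Adj u x → x = w) :
    (G.induce (S.erase u : Set V)).Connected := by
  have hwE : w ∈ S.erase u := mem_erase.2 ⟨huw.ne', hw⟩
  suffices G.componentIn (S.erase u) w = S.erase u from this ▸ induce_componentIn_connected hwE
  refine (componentIn_subset _ _).antisymm fun z hz => ?_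
  obtain ⟨hzu, hzS⟩ := mem_erase.1 hz
  obtain rfl | ⟨y, hy, huy, hzy⟩ := (mem_iff_eq_or_mem_componentIn_erase hS hu).1 hzS
  · exact absurd rfl hzu
  · rwa [← huniq y hy huy]

open Classical in
variable (G) in
noncomputable def connectedSubsets (U : Finset V) : Finset (Finset V) :=
  U.powerset.filter fun S => (G.induce (S : Set V)).Connected

theorem mem_connectedSubsets {U S : Finset V} :
    S ∈ G.connectedSubsets U ↔ S ⊆ U ∧ (G.induce (S : Set V)).Connected := by
  simp only [connectedSubsets, mem_filter, mem_powerset]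

section Degree

variable [Fintype V] [DecidableRel G.Adj]

theorem eq_or_eq_of_adj_of_degree_le_two {v a b c : V} (hv : G.degree v ≤ 2) (ha : G.Adj v a)
    (hb : G.Adj v b) (hc : G.Adj v c) (hab : a ≠ b) : c = a ∨ c = b := by
  classical
  by_contra! h
  have hsub : ({a, b, c} : Finset V) ⊆ G.neighborFinset v := by
    simp [insert_subset_iff, ha, hb, hc]
  have := (card_le_card hsub).trans hv
  rw [card_insert_of_notMem (by simp [hab, h.1.symm]),
    card_pair (Ne.symm h.2)] at this
  omega

theorem eq_of_unique_adj_of_card_eq {K K' : Finset V} (hlow : ∀ v ∈ K, G.degree v ≤ 2)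
    (hK : (G.induce (K : Set V)).Connected) (hK' : (G.induce (K' : Set V)).Connected)
    {u w : V} (huw : G.Adj u w) (hu : u ∈ K) (hu' : u ∈ K') (hw : w ∈ K) (hw' : w ∈ K')
    (huniq : ∀ x ∈ K, G.Adj u x → x = w) (huniq' : ∀ x ∈ K', G.Adj u x → x = w)
    (hcard : #K = #K') : K = K' := by
  classical
  -- Induction on `#K`: remove `u`; as `w` has degree at most two, its other neighbour `w₁` is
  -- forced, and `(w, w₁)` is the first edge of both `K - u` and `K' - u`.
  obtain ⟨m, hm⟩ : ∃ m, #K = m := ⟨_, rfl⟩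
  induction m generalizing K K' u w with
  | zero => exact absurd hm (card_ne_zero_of_mem hu)
  | succ m ih =>
    suffices K.erase u = K'.erase u by rw [← insert_erase hu, this, insert_erase hu']
    have hwE : w ∈ K.erase u := mem_erase.2 ⟨huw.ne', hw⟩
    have hwE' : w ∈ K'.erase u := mem_erase.2 ⟨huw.ne', hw'⟩
    have hcardE : #(K.erase u) = #(K'.erase u) := by
      rw [card_erase_of_mem hu, card_erase_of_mem hu', hcard]
    rcases (one_le_card.2 ⟨w, hwE⟩).eq_or_lt with hone | htwo
    · rw [eq_singleton_iff_unique_mem.2 ⟨hwE, fun x hx => card_le_one.1 hone.ge x hx w hwE⟩,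
        eq_singleton_iff_unique_mem.2
          ⟨hwE', fun x hx => card_le_one.1 (hcardE ▸ hone.ge) x hx w hwE'⟩]
    have hE := induce_erase_connected_of_unique_adj hK hu hw huw huniq
    have hE' := induce_erase_connected_of_unique_adj hK' hu' hw' huw huniq'
    obtain ⟨x, hx, hxw⟩ := exists_mem_ne htwo w
    obtain ⟨x', hx', hxw'⟩ := exists_mem_ne (hcardE ▸ htwo) w
    obtain ⟨w₁, hw₁, hww₁⟩ := exists_adj_of_induce_connected hE hwE hx hxw.symm
    obtain ⟨w₂, hw₂, hww₂⟩ := exists_adj_of_induce_connected hE' hwE' hx' hxw'.symm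
    have hdeg := hlow w hw
    have hu₁ : u ≠ w₁ := (ne_of_mem_erase hw₁).symm
    have hnext : ∀ y ∈ K.erase u, G.Adj w y → y = w₁ := fun y hy hwy =>
      (eq_or_eq_of_adj_of_degree_le_two hdeg huw.symm hww₁ hwy hu₁).resolve_left
        (ne_of_mem_erase hy)
    have hnext' : ∀ y ∈ K'.erase u, G.Adj w y → y = w₁ := fun y hy hwy =>
      (eq_or_eq_of_adj_of_degree_le_two hdeg huw.symm hww₁ hwy hu₁).resolve_left
        (ne_of_mem_erase hy)
    obtain rfl := hnext' w₂ hw₂ hww₂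
    exact ih (fun v hv => hlow v (mem_of_mem_erase hv)) hE hE' hww₂ hwE hwE' hw₁ hw₂ hnext
      hnext' hcardE (by rw [card_erase_of_mem hu, hm, Nat.add_sub_cancel])

theorem adj_closed_or_eq_singleton_or_exists_unique_adj {K : Finset V}
    (hK : (G.induce (K : Set V)).Connected) (hlow : ∀ v ∈ K, G.degree v ≤ 2) :
    (∀ v ∈ K, ∀ w, G.Adj v w → w ∈ K) ∨ (∃ v, K = {v}) ∨
      ∃ u w, G.Adj u w ∧ u ∈ K ∧ w ∈ K ∧ ∀ x ∈ K, G.Adj u x → x = w := by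
  by_cases hclosed : ∀ v ∈ K, ∀ w, G.Adj v w → w ∈ K
  · exact .inl hclosed
  push Not at hclosed
  obtain ⟨v, hv, w, hvw, hwK⟩ := hclosed
  by_cases hnbr : ∃ x ∈ K, G.Adj v x
  · obtain ⟨x, hx, hvx⟩ := hnbr
    refine .inr (.inr ⟨v, x, hvx, hv, hx, fun y hy hvy => ?_⟩)
    exact (eq_or_eq_of_adj_of_degree_le_two (hlow v hv) hvx hvw hvy
      (ne_of_mem_of_not_mem hx hwK)).resolve_right (ne_of_mem_of_not_mem hy hwK)
  · push Not at hnbr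
    refine .inr (.inl ⟨v, (subset_of_induce_connected_of_adj_closed hK hv
      (mem_singleton_self v) ?_).antisymm (singleton_subset_iff.2 hv)⟩)
    rintro c hc z hz hcz
    rw [mem_singleton] at hc
    exact absurd hcz (hc ▸ hnbr z hz)

theorem card_connectedSubsets_le_of_degree_le_two {U : Finset V}
    (hU : ∀ v ∈ U, G.degree v ≤ 2) :
    #(G.connectedSubsets U) ≤ 2 * Fintype.card V + Fintype.card G.Dart * Fintype.card V := by
  classical
  -- A singleton, a connected component of `G` given by any of its vertices, or a path given by
  -- its first dart `e` and its size `m + 1`.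
  have hcodes := card_le_card_of_forall_subsingleton (s := G.connectedSubsets U)
    (t := (univ : Finset (V ⊕ V ⊕ G.Dart × Fin (Fintype.card V))))
    (fun K c => match c with
      | .inl u => K = {u}
      | .inr (.inl u) => u ∈ K ∧ ∀ v ∈ K, ∀ w, G.Adj v w → w ∈ K
      | .inr (.inr (e, m)) =>
          e.fst ∈ K ∧ e.snd ∈ K ∧ (∀ x ∈ K, G.Adj e.fst x → x = e.snd) ∧ #K = m + 1)
    ?_ ?_
  · simpa [Fintype.card_sum, Fintype.card_prod, two_mul, add_assoc] using hcodes
  · intro K hK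
    obtain ⟨hKU, hKc⟩ := mem_connectedSubsets.1 hK
    rcases adj_closed_or_eq_singleton_or_exists_unique_adj hKc fun v hv => hU v (hKU hv) with
      hclosed | ⟨v, rfl⟩ | ⟨u, w, huw, hu, hw, huniq⟩
    · obtain ⟨⟨u, hu⟩⟩ := hKc.nonempty
      exact ⟨.inr (.inl u), mem_univ _, hu, hclosed⟩
    · exact ⟨.inl v, mem_univ _, rfl⟩
    · have hpos : 0 < #K := card_pos.2 ⟨u, hu⟩
      have hle : #K ≤ Fintype.card V := card_le_univ K
      exact ⟨.inr (.inr (⟨(u, w), huw⟩, ⟨#K - 1, by omega⟩)), mem_univ _, hu, hw, huniq,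
        by simp only; omega⟩
  · rintro (u | u | ⟨e, m⟩) - K ⟨hK, hr⟩ K' ⟨hK', hr'⟩
    · exact hr.trans hr'.symm
    · exact (subset_of_induce_connected_of_adj_closed (mem_connectedSubsets.1 hK).2 hr.1 hr'.1
        fun c hc z _ => hr'.2 c hc z).antisymm
        (subset_of_induce_connected_of_adj_closed (mem_connectedSubsets.1 hK').2 hr'.1 hr.1
          fun c hc z _ => hr.2 c hc z)
    · obtain ⟨hKU, hKc⟩ := mem_connectedSubsets.1 hK
      obtain ⟨hu, hw, huniq, hcard⟩ := hr
      obtain ⟨hu', hw', huniq', hcard'⟩ := hr'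
      exact eq_of_unique_adj_of_card_eq (fun v hv => hU v (hKU hv)) hKc
        (mem_connectedSubsets.1 hK').2 e.adj hu hu' hw hw' huniq huniq' (hcard.trans hcard'.symm)

theorem card_connectedSubsets_filter_mem_le [DecidableEq V] (U : Finset V) (X : V) :
    #((G.connectedSubsets U).filter (X ∈ ·)) ≤
      (#(G.connectedSubsets (U.erase X)) + 1) ^ G.degree X := by
  let code (S : Finset V) (y : G.neighborFinset X) : Option (Finset V) :=
    if (y : V) ∈ S then some (G.componentIn (S.erase X) y) else none
  calc _ ≤ #(Fintype.piFinset fun _ : G.neighborFinset X =>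
        (G.connectedSubsets (U.erase X)).insertNone) := by
        refine card_le_card_of_injOn code (fun S hS => ?_) (fun S hS S' hS' h => ?_)
        · obtain ⟨hS, hXS⟩ := mem_filter.1 hS
          obtain ⟨hSU, hSc⟩ := mem_connectedSubsets.1 hS
          refine Fintype.mem_piFinset.2 fun y => mem_insertNone.2 fun C hC => ?_
          have hXy := (mem_neighborFinset _ _ _).1 y.2
          by_cases hy : (y : V) ∈ S
          · simp only [code, hy, if_true, Option.mem_def, Option.some.injEq] at hC
            subst hC
            exact mem_connectedSubsets.2
              ⟨(componentIn_subset _ _).trans (erase_subset_erase X hSU),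
                induce_componentIn_connected (mem_erase.2 ⟨hXy.ne', hy⟩)⟩
          · simp [code, hy] at hC
        · obtain ⟨hS, hXS⟩ := mem_filter.1 (mem_coe.1 hS)
          obtain ⟨hS', hXS'⟩ := mem_filter.1 (mem_coe.1 hS')
          have hmem : ∀ y, G.Adj X y → (y ∈ S ↔ y ∈ S') := fun y hXy => by
            have := congrFun h ⟨y, (mem_neighborFinset _ _ _).2 hXy⟩
            by_cases hy : y ∈ S <;> by_cases hy' : y ∈ S' <;> simp_all [code]
          refine eq_of_componentIn_erase_eq (mem_connectedSubsets.1 hS).2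
            (mem_connectedSubsets.1 hS').2 hXS hXS' hmem fun y hy hXy => ?_
          have := congrFun h ⟨y, (mem_neighborFinset _ _ _).2 hXy⟩
          simpa [code, hy, (hmem y hXy).1 hy] using this
    _ = (#(G.connectedSubsets (U.erase X)) + 1) ^ G.degree X := by
        simp [Fintype.card_piFinset, card_insertNone]

theorem card_connectedSubsets_le_card_erase_add [DecidableEq V] (U : Finset V) (X : V) :
    #(G.connectedSubsets U) ≤
      #(G.connectedSubsets (U.erase X)) + (#(G.connectedSubsets (U.erase X)) + 1) ^ G.degree X := by
  rw [← card_filter_add_card_filter_not (X ∉ ·)]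
  gcongr
  · intro S hS
    obtain ⟨hS, hXS⟩ := mem_filter.1 hS
    obtain ⟨hSU, hSc⟩ := mem_connectedSubsets.1 hS
    exact mem_connectedSubsets.2 ⟨subset_erase.2 ⟨hSU, hXS⟩, hSc⟩
  · simpa only [not_not] using G.card_connectedSubsets_filter_mem_le U X

end Degree

end SimpleGraph

def connectedCountBound (d n k : ℕ) : ℕ :=
  2 ^ ((2 * (d + 1)) ^ (k + 1)) * n ^ ((d + 1) ^ (k + 1))

theorem two_mul_add_mul_le_connectedCountBound_zero (d n : ℕ) :
    2 * n + d * n * n ≤ connectedCountBound d n 0 := by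
  rcases Nat.eq_zero_or_pos n with rfl | hn
  · simp
  have hn1 : n ≤ n ^ (d + 1) := Nat.le_self_pow d.succ_ne_zero n
  have hn2 : d * n * n ≤ d * n ^ (d + 1) := by
    rcases Nat.eq_zero_or_pos d with rfl | hd
    · simp
    rw [mul_assoc, ← sq]
    exact Nat.mul_le_mul_left d (Nat.pow_le_pow_right hn (by omega))
  have hd : d + 2 ≤ 2 ^ (2 * (d + 1)) :=
    Nat.lt_two_pow_self.le.trans (Nat.pow_le_pow_right two_pos (by omega))
  calc 2 * n + d * n * n ≤ (d + 2) * n ^ (d + 1) := by nlinarith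
    _ ≤ 2 ^ (2 * (d + 1)) * n ^ (d + 1) := Nat.mul_le_mul_right _ hd
    _ = connectedCountBound d n 0 := by simp [connectedCountBound]

theorem add_add_one_pow_le_two_mul_pow {M : ℕ} (hM : 1 ≤ M) (d : ℕ) :
    M + (M + 1) ^ d ≤ (2 * M) ^ (d + 1) := by
  have h1 : (M + 1) ^ d ≤ (2 * M) ^ d := Nat.pow_le_pow_left (by omega) d
  have h2 : 1 ≤ (2 * M) ^ d := Nat.one_le_pow _ _ (by omega)
  rw [pow_succ]
  nlinarith

theorem two_mul_connectedCountBound_pow_le (d n k : ℕ) :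
    (2 * connectedCountBound d n k) ^ (d + 1) ≤ connectedCountBound d n (k + 1) := by
  have ha : 1 ≤ (2 * (d + 1)) ^ (k + 1) := Nat.one_le_pow _ _ (by omega)
  calc (2 * connectedCountBound d n k) ^ (d + 1)
      = 2 ^ (((2 * (d + 1)) ^ (k + 1) + 1) * (d + 1)) * n ^ ((d + 1) ^ (k + 2)) := by
        simp only [connectedCountBound]; ring
    _ ≤ 2 ^ ((2 * (d + 1)) ^ (k + 2)) * n ^ ((d + 1) ^ (k + 2)) := by
        gcongr
        · exact one_le_two
        · rw [pow_succ (2 * (d + 1)) (k + 1)]; nlinarith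

theorem connectedCountBound_mono (d n : ℕ) : Monotone (connectedCountBound d n) :=
  monotone_nat_of_le_succ fun k =>
    calc connectedCountBound d n k ≤ (2 * connectedCountBound d n k) ^ (d + 1) :=
          (Nat.le_mul_of_pos_left _ two_pos).trans (Nat.le_self_pow d.succ_ne_zero _)
      _ ≤ connectedCountBound d n (k + 1) := two_mul_connectedCountBound_pow_le d n k

theorem SimpleGraph.card_connectedSubsets_le {V : Type*} [Fintype V] (G : SimpleGraph V)
    [DecidableRel G.Adj] {d : ℕ} (hdeg : ∀ v, G.degree v ≤ d) (U : Finset V) :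
    #(G.connectedSubsets U) ≤
      connectedCountBound d (Fintype.card V) #(U.filter fun v => 3 ≤ G.degree v) := by
  classical
  obtain ⟨k, hk⟩ : ∃ k, #(U.filter fun v => 3 ≤ G.degree v) = k := ⟨_, rfl⟩
  induction k generalizing U with
  | zero =>
    have hlow : ∀ v ∈ U, G.degree v ≤ 2 := fun v hv => by
      by_contra! h
      exact card_ne_zero_of_mem (mem_filter.2 ⟨hv, h⟩) hk
    have hdart : Fintype.card G.Dart ≤ d * Fintype.card V := by
      rw [G.dart_card_eq_sum_degrees, mul_comm, ← smul_eq_mul, ← card_univ]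
      exact sum_le_card_nsmul _ _ _ fun v _ => hdeg v
    calc #(G.connectedSubsets U)
        ≤ 2 * Fintype.card V + Fintype.card G.Dart * Fintype.card V :=
          G.card_connectedSubsets_le_of_degree_le_two hlow
      _ ≤ 2 * Fintype.card V + d * Fintype.card V * Fintype.card V := by gcongr
      _ ≤ _ := hk ▸ two_mul_add_mul_le_connectedCountBound_zero d _
  | succ k ih =>
    obtain ⟨X, hX⟩ : (U.filter fun v => 3 ≤ G.degree v).Nonempty := card_pos.1 (by omega)
    have hk' : #((U.erase X).filter fun v => 3 ≤ G.degree v) = k := by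
      rw [filter_erase, card_erase_of_mem hX, hk, Nat.add_sub_cancel]
    have hM : 1 ≤ connectedCountBound d (Fintype.card V) k :=
      Nat.one_le_iff_ne_zero.2 (by
        simp [connectedCountBound, (Fintype.card_pos_iff.2 ⟨X⟩).ne'])
    have ih := hk' ▸ ih (U.erase X) hk'
    calc #(G.connectedSubsets U)
        ≤ #(G.connectedSubsets (U.erase X)) +
            (#(G.connectedSubsets (U.erase X)) + 1) ^ G.degree X :=
          G.card_connectedSubsets_le_card_erase_add U X
      _ ≤ connectedCountBound d (Fintype.card V) k +
            (connectedCountBound d (Fintype.card V) k + 1) ^ d := by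
          gcongr
          · omega
          · exact hdeg X
      _ ≤ (2 * connectedCountBound d (Fintype.card V) k) ^ (d + 1) :=
          add_add_one_pow_le_two_mul_pow hM d
      _ ≤ _ := hk ▸ two_mul_connectedCountBound_pow_le d _ k

/-- Bound on the number of connected induced subgraphs of a graph with `n` vertices,
maximum degree at most `d`, and at most `t` vertices of degree ≥ 3. -/
theorem stmt6 (n d t : ℕ) {V : Type*} [Fintype V] (G : SimpleGraph V)
    [DecidableRel G.Adj]
    (hcard : Fintype.card V = n)
    (hdeg : ∀ v, G.degree v ≤ d)
    (ht : {v : V | 3 ≤ G.degree v}.ncard ≤ t) :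
    {S : Finset V | (G.induce (S : Set V)).Connected}.ncard ≤
      2 ^ ((2 * (d + 1)) ^ (t + 1)) * n ^ ((d + 1) ^ (t + 1)) := by
  classical
  have hconn :
      {S : Finset V | (G.induce (S : Set V)).Connected} = ↑(G.connectedSubsets univ) := by
    ext S
    simp [SimpleGraph.mem_connectedSubsets]
  have hhigh : #(univ.filter fun v => 3 ≤ G.degree v) ≤ t := by
    rwa [← Set.ncard_coe_finset, coe_filter_univ]
  rw [hconn, Set.ncard_coe_finset, ← hcard]
  exact (G.card_connectedSubsets_le hdeg univ).trans (connectedCountBound_mono d _ hhigh)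
end

section
/- Suppose (p°, x°) is an optimal point of P_n with defender utility U° = p_n°·Δ_{D,n} − a·x°, and suppose x° + Δ_n ≥ c > 0 for some constant c. Let ε' ∈ (0, ε] and let τ = max{0, max_{i≤n} ε'(p_n° − p_i°)/(x° + ε' + Δ_n)}. If p_n° ≥ τ, then the point with x̂ = x° + ε', p̂_n = p_n° − τ, and p̂_i = p_i° for i ≠ n satisfies all best-response constraints x(p_n − p_i) − p_i Δ_i + p_n Δ_n + δ_{i,n} ≤ 0 for all i ≠ n, and its objective value is at least U° − ε·(max_i |p_n° − p_i°|/(x° + Δ_n) + a)·(1 + o(1)). -/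
open Finset

/-- Raising `x` by `ε` and lowering `p` by `τ` changes the left-hand side by exactly
`ε (p - q) - τ (x + ε + D)`. -/
theorem best_response_shift_nonpos {x p q P D δ ε τ : ℝ}
    (hfeas : x * (p - q) - q * P + p * D + δ ≤ 0) (hτ : ε * (p - q) ≤ τ * (x + ε + D)) :
    (x + ε) * ((p - τ) - q) - q * P + (p - τ) * D + δ ≤ 0 := by
  linear_combination hfeas + hτ

theorem mul_div_le_mul_div_of_le {u M ε ε' d d' : ℝ} (huM : u ≤ M) (hM : 0 ≤ M)
    (hε' : 0 ≤ ε') (hεε : ε' ≤ ε) (hd : 0 < d) (hdd : d ≤ d') :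
    ε' * u / d' ≤ ε * M / d := by
  have hd' : 0 < d' := hd.trans_le hdd
  have hεM : 0 ≤ ε * M := mul_nonneg (hε'.trans hεε) hM
  calc ε' * u / d' ≤ ε' * M / d' := by gcongr
    _ ≤ ε * M / d' := by gcongr
    _ ≤ ε * M / d := div_le_div_of_nonneg_left hεM hd hdd

theorem stmt13_general {n : ℕ} (i₀ : Fin n) (Δ δ : Fin n → ℝ) (ΔD a c ε ε' x₀ : ℝ)
    (p₀ : Fin n → ℝ) (τ : ℝ)
    (hΔD : 0 ≤ ΔD) (ha : 0 ≤ a)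
    (hc : 0 < c) (hxc : c ≤ x₀ + Δ i₀)
    (hε' : 0 < ε') (hεε : ε' ≤ ε)
    (hτ : τ = max 0 (Finset.univ.sup' ⟨i₀, Finset.mem_univ i₀⟩
      fun i => ε' * (p₀ i₀ - p₀ i) / (x₀ + ε' + Δ i₀)))
    (hfeas : ∀ i, i ≠ i₀ →
      x₀ * (p₀ i₀ - p₀ i) - p₀ i * Δ i + p₀ i₀ * Δ i₀ + δ i ≤ 0) :
    (∀ i, i ≠ i₀ →
      (x₀ + ε') * ((p₀ i₀ - τ) - p₀ i) - p₀ i * Δ i + (p₀ i₀ - τ) * Δ i₀ + δ i ≤ 0) ∧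
    (p₀ i₀ - τ) * ΔD - a * (x₀ + ε') ≥
      (p₀ i₀ * ΔD - a * x₀) -
        ε * (ΔD * (Finset.univ.sup' ⟨i₀, Finset.mem_univ i₀⟩
          fun i => |p₀ i₀ - p₀ i|) / (x₀ + Δ i₀) + a) := by
  set M := Finset.univ.sup' ⟨i₀, Finset.mem_univ i₀⟩ fun i => |p₀ i₀ - p₀ i|
  have hd : 0 < x₀ + Δ i₀ := hc.trans_le hxc
  have hd' : 0 < x₀ + ε' + Δ i₀ := by linarith
  have hgap_le_M : ∀ i, p₀ i₀ - p₀ i ≤ M := fun i =>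
    (le_abs_self _).trans (le_sup' (fun i => |p₀ i₀ - p₀ i|) (mem_univ i))
  have hM : 0 ≤ M := by simpa using hgap_le_M i₀
  have hτ_ge : ∀ i, ε' * (p₀ i₀ - p₀ i) ≤ τ * (x₀ + ε' + Δ i₀) := fun i =>
    (div_le_iff₀ hd').1 <| hτ ▸ le_max_of_le_right
      (le_sup' (fun i => ε' * (p₀ i₀ - p₀ i) / (x₀ + ε' + Δ i₀)) (mem_univ i))
  have hτ_le : τ ≤ ε * M / (x₀ + Δ i₀) := by
    rw [hτ]
    refine max_le (div_nonneg (mul_nonneg (hε'.le.trans hεε) hM) hd.le)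
      (sup'_le _ _ fun i _ => ?_)
    exact mul_div_le_mul_div_of_le (hgap_le_M i) hM hε'.le hεε hd (by linarith)
  refine ⟨fun i hi => best_response_shift_nonpos (hfeas i hi) (hτ_ge i), ?_⟩
  linear_combination mul_le_mul_of_nonneg_right hτ_le hΔD + mul_le_mul_of_nonneg_left hεε ha

/-- Case 1 of the FPT approximation theorem: shifting `x` up by `ε' ≤ ε` and `pₙ`
down by `τ` preserves all best-response constraints and loses at most
`ε·(Δ_{D,n}·maxᵢ|pₙ° − pᵢ°|/(x° + Δₙ) + a)` in the objective. -/
theorem stmt13 {n : ℕ} (i₀ : Fin n) (Δ δ : Fin n → ℝ) (ΔD a c ε ε' x₀ : ℝ)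
    (p₀ : Fin n → ℝ) (τ : ℝ)
    (hΔ : ∀ i, 0 ≤ Δ i) (hΔD : 0 ≤ ΔD) (ha : 0 ≤ a)
    (hc : 0 < c) (hxc : c ≤ x₀ + Δ i₀) (hx₀ : 0 ≤ x₀)
    (hε' : 0 < ε') (hεε : ε' ≤ ε)
    (hτ : τ = max 0 (Finset.univ.sup' ⟨i₀, Finset.mem_univ i₀⟩
      fun i => ε' * (p₀ i₀ - p₀ i) / (x₀ + ε' + Δ i₀)))
    (hpτ : τ ≤ p₀ i₀)
    (hfeas : ∀ i, i ≠ i₀ →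
      x₀ * (p₀ i₀ - p₀ i) - p₀ i * Δ i + p₀ i₀ * Δ i₀ + δ i ≤ 0) :
    (∀ i, i ≠ i₀ →
      (x₀ + ε') * ((p₀ i₀ - τ) - p₀ i) - p₀ i * Δ i + (p₀ i₀ - τ) * Δ i₀ + δ i ≤ 0) ∧
    (p₀ i₀ - τ) * ΔD - a * (x₀ + ε') ≥
      (p₀ i₀ * ΔD - a * x₀) -
        ε * (ΔD * (Finset.univ.sup' ⟨i₀, Finset.mem_univ i₀⟩
          fun i => |p₀ i₀ - p₀ i|) / (x₀ + Δ i₀) + a) :=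
  stmt13_general i₀ Δ δ ΔD a c ε ε' x₀ p₀ τ hΔD ha hc hxc hε' hεε hτ hfeas
end

section
/- Two targets t_i and t_k with identical auditing-resource sets can be merged without changing the marginal polytope: if F(t_i) = F(t_k) (the same set of resources can audit both), then the polytope of implementable coverage vectors projected onto coordinates (p_i + p_k, (p_l)_{l ≠ i,k}) equals the implementable polytope of the instance in which t_i and t_k are replaced by a single merged target with capacity bound p_i + p_k ≤ 2 and the same resource set. -/
/-- Implementable coverage vectors: marginals of a nonnegative fractional
assignment with row sums ≤ 1, marginals ≤ 1, respecting the restriction `R`. -/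
def Impl18 (n k : ℕ) (R : Fin k → Fin n → Prop) : Set (Fin n → ℝ) :=
  {p | ∃ q : Fin k → Fin n → ℝ,
    (∀ j i, 0 ≤ q j i) ∧ (∀ i, p i = ∑ j, q j i) ∧ (∀ i, p i ≤ 1) ∧
    (∀ j, ∑ i, q j i ≤ 1) ∧ ∀ j i, R j i → q j i = 0}

/-!
Merging is a linear map on the columns of an assignment that preserves every row sum, so
it sends implementable vectors into the merged polytope. Conversely, a merged column of
total mass at most 2 is split evenly between `i₀` and `i₁`: each half has mass at most 1,
the row sums are unchanged, and since `i₀` and `i₁` can be audited by the same resources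
the split assignment respects the restriction.
-/

open Finset

section Merge

variable {α M : Type*} [DecidableEq α] [AddCommMonoid M] {i₀ i₁ : α}

def mergeTargets (i₀ i₁ : α) (v : α → M) : {l // l ≠ i₁} → M :=
  fun l => if l.val = i₀ then v i₀ + v i₁ else v l.val

theorem mergeTargets_apply_self (hne : i₀ ≠ i₁) (v : α → M) :
    mergeTargets i₀ i₁ v ⟨i₀, hne⟩ = v i₀ + v i₁ :=
  if_pos rfl

theorem mergeTargets_apply_of_ne {l : {l // l ≠ i₁}} (hl : l.val ≠ i₀) (v : α → M) :
    mergeTargets i₀ i₁ v l = v l :=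
  if_neg hl

theorem mergeTargets_sum_apply {ι : Type*} (s : Finset ι) (v : ι → α → M) (l : {l // l ≠ i₁}) :
    mergeTargets i₀ i₁ (fun i => ∑ j ∈ s, v j i) l = ∑ j ∈ s, mergeTargets i₀ i₁ (v j) l := by
  unfold mergeTargets
  split_ifs
  · exact (sum_add_distrib).symm
  · rfl

theorem sum_mergeTargets [Fintype α] (hne : i₀ ≠ i₁) (v : α → M) :
    ∑ l, mergeTargets i₀ i₁ v l = ∑ l, v l := by
  have hsplit : mergeTargets i₀ i₁ v =
      fun l => v l.val + if l = ⟨i₀, hne⟩ then v i₁ else 0 := by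
    funext l
    by_cases hl : l.val = i₀
    · rw [mergeTargets, if_pos hl, if_pos (Subtype.ext hl), hl]
    · rw [mergeTargets_apply_of_ne hl, if_neg (fun h => hl (congrArg Subtype.val h)), add_zero]
  rw [hsplit, sum_add_distrib, sum_ite_eq', if_pos (mem_univ _),
    Fintype.sum_eq_add_sum_subtype_ne _ i₁, add_comm]

theorem mergeTargets_nonneg [PartialOrder M] [IsOrderedAddMonoid M] {v : α → M}
    (hv : ∀ i, 0 ≤ v i) (l : {l // l ≠ i₁}) : 0 ≤ mergeTargets i₀ i₁ v l := by
  unfold mergeTargets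
  split_ifs
  · exact add_nonneg (hv i₀) (hv i₁)
  · exact hv l

theorem mergeTargets_eq_zero {Z : α → Prop} (hZ : Z i₀ ↔ Z i₁) {v : α → M}
    (hv : ∀ i, Z i → v i = 0) (l : {l // l ≠ i₁}) (hl : Z l.val) :
    mergeTargets i₀ i₁ v l = 0 := by
  unfold mergeTargets
  split_ifs with h
  · rw [h] at hl
    rw [hv i₀ hl, hv i₁ (hZ.1 hl), add_zero]
  · exact hv l hl

end Merge

section Split

variable {α K : Type*} [DecidableEq α] [Field K] {i₀ i₁ : α}

def splitTarget (hne : i₀ ≠ i₁) (w : {l // l ≠ i₁} → K) : α → K :=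
  fun i => if h : i = i₀ ∨ i = i₁ then w ⟨i₀, hne⟩ / 2 else w ⟨i, fun e => h (Or.inr e)⟩

theorem splitTarget_apply_of_mem (hne : i₀ ≠ i₁) (w : {l // l ≠ i₁} → K) {i : α}
    (hi : i = i₀ ∨ i = i₁) : splitTarget hne w i = w ⟨i₀, hne⟩ / 2 :=
  dif_pos hi

theorem splitTarget_apply_of_ne (hne : i₀ ≠ i₁) (w : {l // l ≠ i₁} → K) {l : {l // l ≠ i₁}}
    (hl : l.val ≠ i₀) : splitTarget hne w l = w l :=
  dif_neg (by rintro (h | h); exacts [hl h, l.2 h])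

theorem mergeTargets_splitTarget [NeZero (2 : K)] (hne : i₀ ≠ i₁) (w : {l // l ≠ i₁} → K) :
    mergeTargets i₀ i₁ (splitTarget hne w) = w := by
  funext l
  by_cases hl : l.val = i₀
  · rw [mergeTargets, if_pos hl, splitTarget_apply_of_mem hne w (Or.inl rfl),
      splitTarget_apply_of_mem hne w (Or.inr rfl), add_halves]
    exact congrArg w (Subtype.ext hl.symm)
  · rw [mergeTargets_apply_of_ne hl, splitTarget_apply_of_ne hne w hl]

theorem sum_splitTarget [Fintype α] [NeZero (2 : K)] (hne : i₀ ≠ i₁) (w : {l // l ≠ i₁} → K) :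
    ∑ i, splitTarget hne w i = ∑ l, w l := by
  rw [← sum_mergeTargets hne, mergeTargets_splitTarget]

theorem splitTarget_sum_apply {ι : Type*} (hne : i₀ ≠ i₁) (s : Finset ι)
    (w : ι → {l // l ≠ i₁} → K) (i : α) :
    splitTarget hne (fun l => ∑ j ∈ s, w j l) i = ∑ j ∈ s, splitTarget hne (w j) i := by
  unfold splitTarget
  split_ifs
  · exact sum_div _ _ _
  · rfl

theorem splitTarget_nonneg [LinearOrder K] [IsStrictOrderedRing K] (hne : i₀ ≠ i₁)
    {w : {l // l ≠ i₁} → K} (hw : ∀ l, 0 ≤ w l) (i : α) : 0 ≤ splitTarget hne w i := by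
  unfold splitTarget
  split_ifs
  · exact div_nonneg (hw _) zero_le_two
  · exact hw _

theorem splitTarget_le [LinearOrder K] [IsStrictOrderedRing K] (hne : i₀ ≠ i₁)
    {w : {l // l ≠ i₁} → K} {c : K} (hw₀ : w ⟨i₀, hne⟩ ≤ 2 * c)
    (hw : ∀ l : {l // l ≠ i₁}, l.val ≠ i₀ → w l ≤ c) (i : α) : splitTarget hne w i ≤ c := by
  unfold splitTarget
  split_ifs with h
  · linarith
  · exact hw _ fun e => h (Or.inl e)

theorem splitTarget_eq_zero (hne : i₀ ≠ i₁) {Z : α → Prop} (hZ : Z i₀ ↔ Z i₁)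
    {w : {l // l ≠ i₁} → K} (hw : ∀ l : {l // l ≠ i₁}, Z l.val → w l = 0) (i : α) (hi : Z i) :
    splitTarget hne w i = 0 := by
  unfold splitTarget
  split_ifs with h
  · rcases h with rfl | rfl
    · rw [hw _ hi, zero_div]
    · rw [hw _ (hZ.2 hi), zero_div]
  · exact hw _ hi

end Split

def ImplMerged {n k : ℕ} (R : Fin k → Fin n → Prop) {i₀ i₁ : Fin n} (hne : i₀ ≠ i₁) :
    Set ({l : Fin n // l ≠ i₁} → ℝ) :=
  {p' | ∃ q : Fin k → {l : Fin n // l ≠ i₁} → ℝ,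
    (∀ j i, 0 ≤ q j i) ∧ (∀ i, p' i = ∑ j, q j i) ∧
    (∀ i : {l : Fin n // l ≠ i₁}, i.val ≠ i₀ → p' i ≤ 1) ∧ p' ⟨i₀, hne⟩ ≤ 2 ∧
    (∀ j, ∑ i, q j i ≤ 1) ∧ ∀ j i, R j i.val → q j i = 0}

theorem mergeTargets_image_Impl18_subset {n k : ℕ} (R : Fin k → Fin n → Prop) {i₀ i₁ : Fin n}
    (hne : i₀ ≠ i₁) (hsame : ∀ j, R j i₀ ↔ R j i₁) :
    mergeTargets i₀ i₁ '' Impl18 n k R ⊆ ImplMerged R hne := by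
  rintro _ ⟨p, ⟨q, hq0, hpq, hp1, hrow, hR⟩, rfl⟩
  have hp : p = fun i => ∑ j, q j i := funext hpq
  refine ⟨fun j => mergeTargets i₀ i₁ (q j), fun j => mergeTargets_nonneg (hq0 j),
    fun l => by rw [hp, mergeTargets_sum_apply], fun l hl => ?_, ?_,
    fun j => (sum_mergeTargets hne (q j)).trans_le (hrow j),
    fun j => mergeTargets_eq_zero (hsame j) (hR j)⟩
  · rw [mergeTargets_apply_of_ne hl]
    exact hp1 l
  · rw [mergeTargets_apply_self]
    linarith [hp1 i₀, hp1 i₁]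

theorem ImplMerged_subset_mergeTargets_image {n k : ℕ} (R : Fin k → Fin n → Prop)
    {i₀ i₁ : Fin n} (hne : i₀ ≠ i₁) (hsame : ∀ j, R j i₀ ↔ R j i₁) :
    ImplMerged R hne ⊆ mergeTargets i₀ i₁ '' Impl18 n k R := by
  rintro p' ⟨q', hq0, hpq, hp1, hp2, hrow, hR⟩
  have hp : p' = fun l => ∑ j, q' j l := funext hpq
  refine ⟨splitTarget hne p', ⟨fun j => splitTarget hne (q' j),
    fun j => splitTarget_nonneg hne (hq0 j), fun i => by rw [hp, splitTarget_sum_apply],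
    splitTarget_le hne (by linarith) hp1,
    fun j => (sum_splitTarget hne (q' j)).trans_le (hrow j),
    fun j => splitTarget_eq_zero hne (hsame j) (hR j)⟩, mergeTargets_splitTarget hne p'⟩

/-- Merging two targets with identical auditing-resource sets: the projection of the
implementable polytope onto `(pᵢ + pₖ, (p_l)_{l ≠ i,k})` equals the implementable
polytope of the merged instance, where the merged target has capacity 2. -/
theorem stmt18 {n k : ℕ} (R : Fin k → Fin n → Prop)
    (i₀ i₁ : Fin n) (hne : i₀ ≠ i₁)
    (hsame : ∀ j, R j i₀ ↔ R j i₁) :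
    (fun p : Fin n → ℝ => fun l : {l : Fin n // l ≠ i₁} =>
        if l.val = i₀ then p i₀ + p i₁ else p l.val) '' Impl18 n k R
      = {p' : {l : Fin n // l ≠ i₁} → ℝ |
          ∃ q : Fin k → {l : Fin n // l ≠ i₁} → ℝ,
            (∀ j i, 0 ≤ q j i) ∧ (∀ i, p' i = ∑ j, q j i) ∧
            (∀ i : {l : Fin n // l ≠ i₁}, i.val ≠ i₀ → p' i ≤ 1) ∧
            p' ⟨i₀, hne⟩ ≤ 2 ∧
            (∀ j, ∑ i, q j i ≤ 1) ∧ ∀ j i, R j i.val → q j i = 0} :=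
  (mergeTargets_image_Impl18_subset R hne hsame).antisymm
    (ImplMerged_subset_mergeTargets_image R hne hsame)
end

section
/- Let c be a constraint Σ_{i ∈ index(T_S)} p_i ≤ |S| produced by iterating over a resource subset S with T_S = OnlyAuditedBy(S), and suppose c is not implied by (not a nonnegative combination of) constraints arising from proper sub-pairs (i.e., there is no proper subset T' ⊊ T_S audited only by a proper subset S' ⊊ S). Then in the intersection graph on merged targets (nodes = equivalence classes of targets under equal resource sets F(t), edges between nodes whose resource sets intersect), the nodes corresponding to targets in T_S form a connected induced subgraph. -/
/-!
Suppose the induced graph on `T_S = OnlyAuditedBy(S)` splits into two connected components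
`C ≠ D`. No resource is shared across components, so the resources `R_C`, `R_D ⊆ S` used by
`C` and by `D` are disjoint. They cannot both be all of `S`: then `S = ∅`, every target of
`T_S` has the empty resource set, and targets with equal resource sets are adjacent. If, say,
`R_C ⊊ S`, then `(C, R_C)` is a proper sub-pair implying the constraint of `(T_S, S)`.
-/

open SimpleGraph

namespace ConstraintFind

variable {T α : Type*} [DecidableEq α] (F : T → Finset α)

def sharedResourceGraph : SimpleGraph T :=
  SimpleGraph.fromRel fun t t' => F t = F t' ∨ (F t ∩ F t').Nonempty

def onlyAuditedBy (S : Finset α) : Set T := {t | F t ⊆ S}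

def auditGraph (S : Finset α) : SimpleGraph (onlyAuditedBy F S) :=
  (sharedResourceGraph F).induce (onlyAuditedBy F S)

variable {F}

theorem reachable_induce_of_shared {s : Set T} {a b : s}
    (h : F a = F b ∨ (F a ∩ F b).Nonempty) :
    ((sharedResourceGraph F).induce s).Reachable a b := by
  rcases eq_or_ne a b with rfl | hab
  · rfl
  · exact Adj.reachable ⟨fun h' => hab (Subtype.ext h'), Or.inl h⟩

variable {S : Finset α}

section Classical

open Classical

noncomputable def componentResources (c : (auditGraph F S).ConnectedComponent) : Finset α :=
  S.filter fun r => ∃ t ∈ c.supp, r ∈ F t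

theorem componentResources_subset (c : (auditGraph F S).ConnectedComponent) :
    componentResources c ⊆ S :=
  Finset.filter_subset _ _

theorem subset_componentResources {c : (auditGraph F S).ConnectedComponent} {t}
    (ht : t ∈ c.supp) : F t ⊆ componentResources c := fun _ hr =>
  Finset.mem_filter.2 ⟨t.2 hr, t, ht, hr⟩

theorem disjoint_componentResources {c d : (auditGraph F S).ConnectedComponent} (hcd : c ≠ d) :
    Disjoint (componentResources c) (componentResources d) := by
  refine Finset.disjoint_left.2 fun r hrc hrd => hcd ?_
  obtain ⟨-, a, ha, hra⟩ := Finset.mem_filter.1 hrc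
  obtain ⟨-, b, hb, hrb⟩ := Finset.mem_filter.1 hrd
  rw [← ha, ← hb]
  exact ConnectedComponent.sound
    (reachable_induce_of_shared (Or.inr ⟨r, Finset.mem_inter.2 ⟨hra, hrb⟩⟩))

theorem componentResources_ssubset_or {c d : (auditGraph F S).ConnectedComponent}
    (hcd : c ≠ d) : componentResources c ⊂ S ∨ componentResources d ⊂ S := by
  simp only [Finset.ssubset_iff_subset_ne, componentResources_subset, true_and]
  by_contra! h
  have hS : S = ∅ := by
    simpa [h.1, h.2] using disjoint_componentResources hcd
  obtain ⟨a, ha⟩ := c.nonempty_supp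
  obtain ⟨b, hb⟩ := d.nonempty_supp
  have hF : ∀ t : onlyAuditedBy F S, F t = ∅ := fun t =>
    Finset.subset_empty.1 (hS ▸ t.2)
  rw [← ha, ← hb] at hcd
  exact hcd (ConnectedComponent.sound
    (reachable_induce_of_shared (Or.inl ((hF a).trans (hF b).symm))))

theorem exists_subpair_of_componentResources_ssubset
    {c d : (auditGraph F S).ConnectedComponent} (hcd : c ≠ d) (hc : componentResources c ⊂ S) :
    ∃ T' : Set T, T'.Nonempty ∧ T' ⊂ onlyAuditedBy F S ∧
      ∃ S' : Finset α, S' ⊂ S ∧ ∀ t ∈ T', F t ⊆ S' := by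
  obtain ⟨b, hb⟩ := d.nonempty_supp
  refine ⟨Subtype.val '' c.supp, c.nonempty_supp.image _, ?_, componentResources c, hc, ?_⟩
  · refine Set.ssubset_iff_exists.2 ⟨by grind, b, b.2, ?_⟩
    rintro ⟨a, ha, hab⟩
    rw [Subtype.val_injective hab] at ha
    exact hcd (ha.symm.trans hb)
  · rintro _ ⟨t, ht, rfl⟩
    exact subset_componentResources ht

end Classical

end ConstraintFind

theorem stmt19_general {T : Type*} {k : ℕ} (F : T → Finset (Fin k))
    (S : Finset (Fin k))
    (hne : {t : T | F t ⊆ S}.Nonempty)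
    (hnonimpl : ¬ ∃ T' : Set T, T'.Nonempty ∧ T' ⊂ {t : T | F t ⊆ S} ∧
      ∃ S' : Finset (Fin k), S' ⊂ S ∧ ∀ t ∈ T', F t ⊆ S') :
    ((SimpleGraph.fromRel fun t t' : T =>
        F t = F t' ∨ (F t ∩ F t').Nonempty).induce {t : T | F t ⊆ S}).Connected := by
  change (ConstraintFind.auditGraph F S).Connected
  have : Nonempty (ConstraintFind.onlyAuditedBy F S) := hne.to_subtype
  refine ⟨fun u v => by_contra fun huv => ?_⟩
  have hcd : _ ≠ _ := mt ConnectedComponent.exact huv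
  rcases ConstraintFind.componentResources_ssubset_or hcd with hc | hd
  · exact hnonimpl (ConstraintFind.exists_subpair_of_componentResources_ssubset hcd hc)
  · exact hnonimpl (ConstraintFind.exists_subpair_of_componentResources_ssubset hcd.symm hd)

/-- Correctness claim of `CONSTRAINT_FIND`: if the constraint for resource subset `S`
(with target set `T_S = {t | F t ⊆ S}`) is not implied by any proper sub-pair, then
in the intersection graph (targets adjacent iff equal or intersecting resource sets)
the targets of `T_S` induce a connected subgraph. -/
theorem stmt19 {T : Type*} [Fintype T] {k : ℕ} (F : T → Finset (Fin k))
    (S : Finset (Fin k))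
    (hne : {t : T | F t ⊆ S}.Nonempty)
    (hnonimpl : ¬ ∃ T' : Set T, T'.Nonempty ∧ T' ⊂ {t : T | F t ⊆ S} ∧
      ∃ S' : Finset (Fin k), S' ⊂ S ∧ ∀ t ∈ T', F t ⊆ S') :
    ((SimpleGraph.fromRel fun t t' : T =>
        F t = F t' ∨ (F t ∩ F t').Nonempty).induce {t : T | F t ⊆ S}).Connected :=
  stmt19_general F S hne hnonimpl
end
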